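/- arXiv:math/0309062 — 2 statements merged into one kernel-verified Lean document; each statement's English description precedes it below -/
import Mathlib

section
/- Let $X$ be a Banach space, $p, q > 1$ with $1/p + 1/q = 1$, and $f : [a,b] \to X$ differentiable with $\|f'\| \in L^p[a,b]$. Then for every $s \in [a,b]$: $\left\| f(s) - \frac{1}{b-a}\int_a^b f(t)\,dt \right\| \le \frac{1}{(q+1)^{1/q}}\left[\left(\frac{s-a}{b-a}\right)^{q+1} + \left(\frac{b-s}{b-a}\right)^{q+1}\right]^{1/q} (b-a)^{1/q} \left(\int_a^b \|f'(t)\|^p\,dt\right)^{1/p}$. -/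
/-!
Montgomery's identity writes `(b - a) f(s) - ∫ f` as `∫ K(s, t) f'(t) dt` for the Peano kernel
`K(s, t) = t - a` (`t ≤ s`), `K(s, t) = t - b` (`s < t`); it follows by integrating by parts against
`t - a` on `[a, s]` and `t - b` on `[s, b]`. Hölder's inequality bounds the norm of this integral by
`‖K(s, ·)‖_q ‖f'‖_p`, and `∫ |K(s, t)|^q dt = ((s - a)^(q + 1) + (b - s)^(q + 1)) / (q + 1)`.
-/

open MeasureTheory intervalIntegral Set

noncomputable def montgomeryKernel (a b s t : ℝ) : ℝ := if t ≤ s then t - a else t - b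

theorem montgomeryKernel_of_le {a b s t : ℝ} (h : t ≤ s) : montgomeryKernel a b s t = t - a :=
  if_pos h

theorem montgomeryKernel_of_lt {a b s t : ℝ} (h : s < t) : montgomeryKernel a b s t = t - b :=
  if_neg h.not_ge

theorem memLp_montgomeryKernel (a b s : ℝ) (p : ENNReal) :
    MemLp (montgomeryKernel a b s) p (volume.restrict (Ioc a b)) := by
  have hmeas : Measurable (montgomeryKernel a b s) :=
    Measurable.ite (measurableSet_le measurable_id measurable_const)
      (measurable_id.sub measurable_const) (measurable_id.sub measurable_const)
  refine MemLp.of_bound hmeas.aestronglyMeasurable (b - a) ?_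
  refine (ae_restrict_iff' measurableSet_Ioc).2 (Filter.Eventually.of_forall fun t ht => ?_)
  rw [Real.norm_eq_abs, abs_le]
  rcases le_or_gt t s with h | h
  · rw [montgomeryKernel_of_le h]; constructor <;> linarith [ht.1, ht.2]
  · rw [montgomeryKernel_of_lt h]; constructor <;> linarith [ht.1, ht.2]

theorem integral_abs_montgomeryKernel_rpow {a b s q : ℝ} (has : a ≤ s) (hsb : s ≤ b)
    (hq : -1 < q) :
    ∫ t in a..b, |montgomeryKernel a b s t| ^ q =
      ((s - a) ^ (q + 1) + (b - s) ^ (q + 1)) / (q + 1) := by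
  have hK_left : EqOn (fun t => (t - a) ^ q) (fun t => |montgomeryKernel a b s t| ^ q)
      (uIoc a s) := fun t ht => by
    rw [uIoc_of_le has] at ht
    simp only [montgomeryKernel_of_le ht.2, abs_of_pos (sub_pos.2 ht.1)]
  have hK_right : EqOn (fun t => (b - t) ^ q) (fun t => |montgomeryKernel a b s t| ^ q)
      (uIoc s b) := fun t ht => by
    rw [uIoc_of_le hsb] at ht
    simp only [montgomeryKernel_of_lt ht.1, abs_of_nonpos (sub_nonpos.2 ht.2), neg_sub]
  have hint_left : IntervalIntegrable (fun t => (t - a) ^ q) volume a s := by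
    simpa using (intervalIntegrable_rpow' (a := 0) (b := s - a) hq).comp_sub_right a
  have hint_right : IntervalIntegrable (fun t => (b - t) ^ q) volume s b := by
    simpa using (intervalIntegrable_rpow' (a := b - s) (b := 0) hq).comp_sub_left b
  have hq1 : q + 1 ≠ 0 := by linarith
  rw [← integral_add_adjacent_intervals (hint_left.congr hK_left) (hint_right.congr hK_right),
    ← integral_congr_ae (ae_of_all _ hK_left), ← integral_congr_ae (ae_of_all _ hK_right),
    integral_comp_sub_right (· ^ q), integral_comp_sub_left (· ^ q), integral_rpow (.inl hq),
    integral_rpow (.inl hq)]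
  simp only [sub_self, Real.zero_rpow hq1]
  ring

section

variable {E : Type*} [NormedAddCommGroup E] [NormedSpace ℝ E]

theorem integral_sub_smul_deriv [CompleteSpace E] {f f' : ℝ → E} {u v : ℝ} (c : ℝ)
    (hf : ∀ t ∈ uIcc u v, HasDerivAt f (f' t) t) (hf' : IntervalIntegrable f' volume u v) :
    ∫ t in u..v, (t - c) • f' t = (v - c) • f v - (u - c) • f u - ∫ t in u..v, f t := by
  have h := integral_smul_deriv_eq_deriv_smul (u := (· - c)) (u' := fun _ => (1 : ℝ))
    (fun t _ => (hasDerivAt_id t).sub_const c) hf intervalIntegrable_const hf'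
  simpa only [one_smul] using h

theorem integral_montgomeryKernel_smul_deriv [CompleteSpace E] {f f' : ℝ → E} {a b s : ℝ}
    (has : a ≤ s) (hsb : s ≤ b)
    (hf : ∀ t ∈ Icc a b, HasDerivAt f (f' t) t) (hf' : IntervalIntegrable f' volume a b) :
    ∫ t in a..b, montgomeryKernel a b s t • f' t = (b - a) • f s - ∫ t in a..b, f t := by
  have hab : a ≤ b := has.trans hsb
  have hfc : ContinuousOn f (Icc a b) := fun t ht => (hf t ht).continuousAt.continuousWithinAt
  have hsub_left : uIcc a s ⊆ Icc a b := by
    rw [uIcc_of_le has]; exact Icc_subset_Icc_right hsb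
  have hsub_right : uIcc s b ⊆ Icc a b := by
    rw [uIcc_of_le hsb]; exact Icc_subset_Icc_left has
  have hf'_left : IntervalIntegrable f' volume a s := hf'.mono_set (by rwa [uIcc_of_le hab])
  have hf'_right : IntervalIntegrable f' volume s b := hf'.mono_set (by rwa [uIcc_of_le hab])
  have hK_left : EqOn (fun t => (t - a) • f' t) (fun t => montgomeryKernel a b s t • f' t)
      (uIoc a s) := fun t ht => by
    rw [uIoc_of_le has] at ht; simp only [montgomeryKernel_of_le ht.2]
  have hK_right : EqOn (fun t => (t - b) • f' t) (fun t => montgomeryKernel a b s t • f' t)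
      (uIoc s b) := fun t ht => by
    rw [uIoc_of_le hsb] at ht; simp only [montgomeryKernel_of_lt ht.1]
  have hint_left := (hf'_left.continuousOn_smul (f := (· - a)) (by fun_prop)).congr hK_left
  have hint_right := (hf'_right.continuousOn_smul (f := (· - b)) (by fun_prop)).congr hK_right
  calc ∫ t in a..b, montgomeryKernel a b s t • f' t
      = (∫ t in a..s, (t - a) • f' t) + ∫ t in s..b, (t - b) • f' t := by
        rw [← integral_add_adjacent_intervals hint_left hint_right,
          integral_congr_ae (ae_of_all _ hK_left), integral_congr_ae (ae_of_all _ hK_right)]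
    _ = ((s - a) • f s - ∫ t in a..s, f t) + (-(s - b) • f s - ∫ t in s..b, f t) := by
        rw [integral_sub_smul_deriv a (fun t ht => hf t (hsub_left ht)) hf'_left,
          integral_sub_smul_deriv b (fun t ht => hf t (hsub_right ht)) hf'_right]
        simp only [sub_self, zero_smul, sub_zero, zero_sub, neg_smul]
    _ = (b - a) • f s - ∫ t in a..b, f t := by
        rw [← integral_add_adjacent_intervals ((hfc.mono hsub_left).intervalIntegrable)
          ((hfc.mono hsub_right).intervalIntegrable)]
        module

theorem norm_integral_smul_le_Lp_mul_Lq {a b p q : ℝ} {k : ℝ → ℝ} {g : ℝ → E} (hab : a ≤ b)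
    (hpq : p.HolderConjugate q) (hk : MemLp k (ENNReal.ofReal p) (volume.restrict (Ioc a b)))
    (hg : MemLp g (ENNReal.ofReal q) (volume.restrict (Ioc a b))) :
    ‖∫ t in a..b, k t • g t‖ ≤
      (∫ t in a..b, |k t| ^ p) ^ (1 / p) * (∫ t in a..b, ‖g t‖ ^ q) ^ (1 / q) := by
  calc ‖∫ t in a..b, k t • g t‖
      ≤ ∫ t in a..b, ‖k t‖ * ‖g t‖ := by
        simpa only [norm_smul] using
          intervalIntegral.norm_integral_le_integral_norm (f := fun t => k t • g t) hab
    _ ≤ (∫ t in a..b, ‖k t‖ ^ p) ^ (1 / p) * (∫ t in a..b, ‖g t‖ ^ q) ^ (1 / q) := by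
        simpa only [integral_of_le hab] using integral_mul_le_Lp_mul_Lq_of_nonneg hpq
          (.of_forall fun t => norm_nonneg (k t)) (.of_forall fun t => norm_nonneg (g t))
          hk.norm hg.norm
    _ = _ := by simp only [Real.norm_eq_abs]

end

theorem inv_mul_rpow_add_rpow_div_eq {x y h q : ℝ} (hx : 0 ≤ x) (hy : 0 ≤ y) (hh : 0 < h)
    (hq : 0 < q) :
    h⁻¹ * ((x ^ (q + 1) + y ^ (q + 1)) / (q + 1)) ^ (1 / q) =
      1 / (q + 1) ^ (1 / q) * ((x / h) ^ (q + 1) + (y / h) ^ (q + 1)) ^ (1 / q) * h ^ (1 / q) := by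
  have hS : 0 ≤ x ^ (q + 1) + y ^ (q + 1) := by positivity
  have hh_pow : h ^ ((q + 1) * (1 / q)) = h ^ (1 / q) * h := by
    rw [show (q + 1) * (1 / q) = 1 / q + 1 by field_simp; ring, Real.rpow_add hh, Real.rpow_one]
  rw [Real.div_rpow hx hh.le, Real.div_rpow hy hh.le, ← add_div,
    Real.div_rpow hS (by positivity), Real.div_rpow hS (by positivity), ← Real.rpow_mul hh.le,
    hh_pow]
  have : 0 < h ^ (1 / q) := by positivity
  field_simp

theorem stmt8_general {X : Type*} [NormedAddCommGroup X] [NormedSpace ℝ X] [CompleteSpace X]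
    {a b : ℝ} (hab : a < b) {f f' : ℝ → X}
    (hderiv : ∀ t ∈ Set.Icc a b, HasDerivAt f (f' t) t)
    (hint : IntervalIntegrable f' volume a b) {p q : ℝ} (hp : 1 < p) (hpq : 1 / p + 1 / q = 1)
    (hLp : IntervalIntegrable (fun t => ‖f' t‖ ^ p) volume a b)
    {s : ℝ} (hs : s ∈ Set.Icc a b) :
    ‖f s - (b - a)⁻¹ • (∫ t in a..b, f t)‖ ≤
      (1 / (q + 1) ^ (1 / q)) *
        (((s - a) / (b - a)) ^ (q + 1) + ((b - s) / (b - a)) ^ (q + 1)) ^ (1 / q) *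
        (b - a) ^ (1 / q) * (∫ t in a..b, ‖f' t‖ ^ p) ^ (1 / p) := by
  obtain ⟨has, hsb⟩ := hs
  have hba : 0 < b - a := sub_pos.2 hab
  have hqp : q.HolderConjugate p :=
    (Real.holderConjugate_iff.2 ⟨hp, by simpa only [one_div] using hpq⟩).symm
  have hf'_memLp : MemLp f' (ENNReal.ofReal p) (volume.restrict (Ioc a b)) := by
    refine (integrable_norm_rpow_iff hint.1.aestronglyMeasurable (by simpa using hqp.symm.pos)
      ENNReal.ofReal_ne_top).1 ?_
    rw [ENNReal.toReal_ofReal hqp.symm.nonneg]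
    exact hLp.1
  calc ‖f s - (b - a)⁻¹ • ∫ t in a..b, f t‖
      = (b - a)⁻¹ * ‖∫ t in a..b, montgomeryKernel a b s t • f' t‖ := by
        rw [integral_montgomeryKernel_smul_deriv has hsb hderiv hint,
          ← norm_smul_of_nonneg (inv_pos.2 hba).le, smul_sub, smul_smul, inv_mul_cancel₀ hba.ne',
          one_smul]
    _ ≤ (b - a)⁻¹ * ((∫ t in a..b, |montgomeryKernel a b s t| ^ q) ^ (1 / q) *
          (∫ t in a..b, ‖f' t‖ ^ p) ^ (1 / p)) := by
        gcongr
        exact norm_integral_smul_le_Lp_mul_Lq hab.le hqp (memLp_montgomeryKernel a b s _)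
          hf'_memLp
    _ = _ := by
        rw [integral_abs_montgomeryKernel_rpow has hsb (by linarith [hqp.lt]), ← mul_assoc,
          inv_mul_rpow_add_rpow_div_eq (sub_nonneg.2 has) (sub_nonneg.2 hsb) hba hqp.pos]

theorem stmt8 {X : Type*} [NormedAddCommGroup X] [NormedSpace ℝ X] [CompleteSpace X]
    {a b : ℝ} (hab : a < b) {f f' : ℝ → X}
    (hderiv : ∀ t ∈ Set.Icc a b, HasDerivAt f (f' t) t)
    (hint : IntervalIntegrable f' volume a b) {p q : ℝ} (hp : 1 < p) (hq : 1 < q) (hpq : 1 / p + 1 / q = 1)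
    (hLp : IntervalIntegrable (fun t => ‖f' t‖ ^ p) volume a b)
    {s : ℝ} (hs : s ∈ Set.Icc a b) :
    ‖f s - (b - a)⁻¹ • (∫ t in a..b, f t)‖ ≤
      (1 / (q + 1) ^ (1 / q)) *
        (((s - a) / (b - a)) ^ (q + 1) + ((b - s) / (b - a)) ^ (q + 1)) ^ (1 / q) *
        (b - a) ^ (1 / q) * (∫ t in a..b, ‖f' t‖ ^ p) ^ (1 / p) :=
  stmt8_general hab hderiv hint hp hpq hLp hs
end

section
/- Let $X$ be a Banach space, $p, q > 1$ with $1/p + 1/q = 1$, and $f : [a,b] \to X$ differentiable with $\|f'\| \in L^p[a,b]$. Then $\left\| \int_a^b f(t)\,dt - (b-a)\cdot\frac{f(a)+f(b)}{2} \right\| \le \frac{(b-a)^{1+1/q}}{2(q+1)^{1/q}} \left(\int_a^b \|f'(t)\|^p\,dt\right)^{1/p}$. -/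
open MeasureTheory intervalIntegral

/-!
Integrating by parts against the Peano kernel `t - (a + b) / 2`, whose derivative is `1` and
whose values at the endpoints are `∓ (b - a) / 2`, turns the trapezoidal error into
`-∫ (t - (a + b) / 2) • f' t`. Hölder's inequality bounds its norm by the `Lᵖ` norm of
`‖f'‖` times the `Lq` norm of the kernel, and the latter is computed explicitly.
-/

theorem intervalIntegrable_abs_rpow {r : ℝ} (hr : -1 < r) (a b : ℝ) :
    IntervalIntegrable (fun x => |x| ^ r) volume a b := by
  have from_zero (c : ℝ) (hc : 0 ≤ c) : IntervalIntegrable (fun x => |x| ^ r) volume 0 c :=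
    (intervalIntegrable_rpow' hr).congr fun x hx => by
      rw [abs_of_nonneg (Set.uIoc_of_le hc ▸ hx).1.le]
  have (c : ℝ) : IntervalIntegrable (fun x => |x| ^ r) volume 0 c := by
    rcases le_total 0 c with hc | hc
    · exact from_zero c hc
    · rw [IntervalIntegrable.iff_comp_neg, neg_zero]
      simpa only [abs_neg] using from_zero (-c) (by linarith)
  exact (this a).symm.trans (this b)

theorem integral_abs_rpow_of_nonneg {h r : ℝ} (hh : 0 ≤ h) (hr : -1 < r) :
    ∫ x in (0)..h, |x| ^ r = h ^ (r + 1) / (r + 1) := by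
  rw [integral_congr (g := fun x => x ^ r) fun x hx => by
      rw [Set.uIcc_of_le hh] at hx; simp only [abs_of_nonneg hx.1],
    integral_rpow (Or.inl hr), Real.zero_rpow (by linarith), sub_zero]

theorem integral_abs_rpow_symm {h r : ℝ} (hh : 0 ≤ h) (hr : -1 < r) :
    ∫ x in -h..h, |x| ^ r = 2 * h ^ (r + 1) / (r + 1) := by
  have hneg : ∫ x in -h..0, |x| ^ r = ∫ x in (0)..h, |x| ^ r := by
    simpa only [abs_neg, neg_zero, neg_neg] using
      (integral_comp_neg (a := 0) (b := h) (fun x => |x| ^ r)).symm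
  rw [← integral_add_adjacent_intervals (intervalIntegrable_abs_rpow hr _ _)
    (intervalIntegrable_abs_rpow hr _ _), hneg, integral_abs_rpow_of_nonneg hh hr]
  ring

theorem integral_abs_sub_midpoint_rpow {a b r : ℝ} (hab : a ≤ b) (hr : -1 < r) :
    ∫ t in a..b, |t - (a + b) / 2| ^ r = (b - a) ^ (r + 1) / (2 ^ r * (r + 1)) := by
  have hh : 0 ≤ (b - a) / 2 := by linarith
  rw [integral_comp_sub_right (fun x => |x| ^ r), show a - (a + b) / 2 = -((b - a) / 2) by ring,
    show b - (a + b) / 2 = (b - a) / 2 by ring, integral_abs_rpow_symm hh hr,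
    Real.div_rpow (by linarith) zero_le_two, Real.rpow_add_one two_ne_zero]
  have : 0 < r + 1 := by linarith
  field_simp

theorem integral_sub_trapezoid_eq_neg_integral_smul_deriv {E : Type*} [NormedAddCommGroup E]
    [NormedSpace ℝ E] [CompleteSpace E] {a b : ℝ} {f f' : ℝ → E}
    (hf : ∀ t ∈ Set.uIcc a b, HasDerivAt f (f' t) t) (hf' : IntervalIntegrable f' volume a b) :
    (∫ t in a..b, f t) - ((b - a) / 2) • (f a + f b) =
      -∫ t in a..b, (t - (a + b) / 2) • f' t := by
  have hu : ∀ t ∈ Set.uIcc a b, HasDerivAt (fun t : ℝ => t - (a + b) / 2) 1 t :=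
    fun t _ => (hasDerivAt_id t).sub_const _
  rw [integral_smul_deriv_eq_deriv_smul hu hf intervalIntegrable_const hf']
  simp only [one_smul]
  rw [show b - (a + b) / 2 = (b - a) / 2 by ring, show a - (a + b) / 2 = -((b - a) / 2) by ring,
    neg_smul, smul_add]
  abel

theorem intervalIntegral.integral_mul_le_Lp_mul_Lq_of_nonneg {a b p q : ℝ} (hab : a ≤ b)
    (hpq : p.HolderConjugate q) {f g : ℝ → ℝ} (hf_nonneg : 0 ≤ f) (hg_nonneg : 0 ≤ g)
    (hf : IntervalIntegrable f volume a b) (hg : IntervalIntegrable g volume a b)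
    (hfp : IntervalIntegrable (fun t => f t ^ p) volume a b)
    (hgq : IntervalIntegrable (fun t => g t ^ q) volume a b) :
    ∫ t in a..b, f t * g t ≤
      (∫ t in a..b, f t ^ p) ^ (1 / p) * (∫ t in a..b, g t ^ q) ^ (1 / q) := by
  have memLp {h : ℝ → ℝ} {r : ℝ} (hr : 0 < r) (h_nonneg : 0 ≤ h)
      (hi : IntervalIntegrable h volume a b)
      (hir : IntervalIntegrable (fun t => h t ^ r) volume a b) :
      MemLp h (ENNReal.ofReal r) (volume.restrict (Set.Ioc a b)) := by
    rw [← integrable_norm_rpow_iff hi.1.1 (by simpa using hr) ENNReal.ofReal_ne_top,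
      ENNReal.toReal_ofReal hr.le]
    simp only [Real.norm_of_nonneg (h_nonneg _)]
    exact hir.1
  simp only [integral_of_le hab]
  exact MeasureTheory.integral_mul_le_Lp_mul_Lq_of_nonneg hpq (.of_forall hf_nonneg)
    (.of_forall hg_nonneg) (memLp hpq.pos hf_nonneg hf hfp) (memLp hpq.symm.pos hg_nonneg hg hgq)

theorem rpow_integral_abs_sub_midpoint_rpow {a b q : ℝ} (hab : a ≤ b) (hq : 0 < q) :
    (∫ t in a..b, |t - (a + b) / 2| ^ q) ^ (1 / q) =
      (b - a) ^ (1 + 1 / q) / (2 * (q + 1) ^ (1 / q)) := by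
  have hba : 0 ≤ b - a := by linarith
  rw [integral_abs_sub_midpoint_rpow hab (by linarith),
    Real.div_rpow (by positivity) (by positivity), Real.mul_rpow (by positivity) (by positivity),
    ← Real.rpow_mul hba, ← Real.rpow_mul zero_le_two, add_mul, mul_one_div_cancel hq.ne', one_mul, Real.rpow_one]

theorem stmt11_general {X : Type*} [NormedAddCommGroup X] [NormedSpace ℝ X] [CompleteSpace X]
    {a b : ℝ} (hab : a < b) {f f' : ℝ → X}
    (hderiv : ∀ t ∈ Set.Icc a b, HasDerivAt f (f' t) t)
    (hint : IntervalIntegrable f' volume a b) {p q : ℝ} (hp : 1 < p) (hpq : 1 / p + 1 / q = 1)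
    (hLp : IntervalIntegrable (fun t => ‖f' t‖ ^ p) volume a b) :
    ‖(∫ t in a..b, f t) - ((b - a) / 2) • (f a + f b)‖ ≤
      ((b - a) ^ (1 + 1 / q) / (2 * (q + 1) ^ (1 / q))) *
        (∫ t in a..b, ‖f' t‖ ^ p) ^ (1 / p) := by
  have hpq' : p.HolderConjugate q :=
    Real.holderConjugate_iff.mpr ⟨hp, by simpa only [one_div] using hpq⟩
  set c := (a + b) / 2
  have hkernel : Continuous fun t => |t - c| := by fun_prop
  rw [integral_sub_trapezoid_eq_neg_integral_smul_deriv (Set.uIcc_of_le hab.le ▸ hderiv) hint,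
    norm_neg, ← rpow_integral_abs_sub_midpoint_rpow hab.le hpq'.symm.pos, mul_comm]
  calc ‖∫ t in a..b, (t - c) • f' t‖
      ≤ ∫ t in a..b, ‖f' t‖ * |t - c| := by
        simpa only [norm_smul, Real.norm_eq_abs, mul_comm] using
          norm_integral_le_integral_norm (f := fun t => (t - c) • f' t) (μ := volume) hab.le
    _ ≤ _ := integral_mul_le_Lp_mul_Lq_of_nonneg hab.le hpq' (fun t => norm_nonneg _)
        (fun t => abs_nonneg _) hint.norm (hkernel.intervalIntegrable a b) hLp
        ((hkernel.rpow_const fun _ => Or.inr hpq'.symm.nonneg).intervalIntegrable a b)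

theorem stmt11 {X : Type*} [NormedAddCommGroup X] [NormedSpace ℝ X] [CompleteSpace X]
    {a b : ℝ} (hab : a < b) {f f' : ℝ → X}
    (hderiv : ∀ t ∈ Set.Icc a b, HasDerivAt f (f' t) t)
    (hint : IntervalIntegrable f' volume a b) {p q : ℝ} (hp : 1 < p) (hq : 1 < q) (hpq : 1 / p + 1 / q = 1)
    (hLp : IntervalIntegrable (fun t => ‖f' t‖ ^ p) volume a b) :
    ‖(∫ t in a..b, f t) - ((b - a) / 2) • (f a + f b)‖ ≤
      ((b - a) ^ (1 + 1 / q) / (2 * (q + 1) ^ (1 / q))) *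
        (∫ t in a..b, ‖f' t‖ ^ p) ^ (1 / p) :=
  stmt11_general hab hderiv hint hp hpq hLp
end
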